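/- Let (L_n)_{n≥1} be i.i.d. positive random variables with mean m > 0 and finite variance, T_n = ∑_{i=1}^n L_i, and let g: ℝ → ℝ be measurable with E[g(L)] and Var(g(L)) finite and g ≥ 0. Then almost surely, ∑_{i=1}^n g(L_{i+1})/(T_i log T_i) = (E[g(L)]/m)·log log n + O(1) as n → ∞. -/

import Mathlib

/-!
Write `c i = g (L (i + 1))`, `t i = T_i`, `a = 𝔼[g L]` and `b i = 1 / (m i log (m i))`.
Chebyshev's inequality along the squares `k²`, Borel–Cantelli and monotone interpolation give
`t n = m n + O(n^{5/6})` and `∑_{i ≤ n} c i = a n + O(n^{5/6})` almost surely, and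
`∑ c i i^{-7/6} < ∞` almost surely because its expectation is finite. Then
`∑ c i / (t i log t i) - (a / m) log log n` splits as
`∑ c i (1 / (t i log t i) - b i) + ∑ (c i - a) b i + a (∑ b i - m⁻¹ log log n)`.
The first series converges since `|1 / (x log x) - 1 / (y log y)| ≤ 2 |x - y| / min(x, y)²`,
the second by summation by parts, and the third term is bounded because the increments of
`log log (m i)` lie between `m b (i + 1)` and `m b i`.
-/

open MeasureTheory ProbabilityTheory Filter Finset Asymptotics Real

lemma Finset.sum_Icc_one_eq_sum_range {M : Type*} [AddCommMonoid M] (f : ℕ → M) (n : ℕ) :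
    ∑ i ∈ Icc 1 n, f i = ∑ i ∈ range n, f (i + 1) := by
  induction n with
  | zero => simp
  | succ n ih => rw [sum_Icc_succ_top (by omega), ih, sum_range_succ]

lemma Finset.sum_Icc_mul_eq_add_sum_range {R : Type*} [CommRing R] (d b : ℕ → R) (n : ℕ) :
    ∑ i ∈ Icc 1 n, d i * b i =
      (∑ i ∈ Icc 1 n, d i) * b n + ∑ i ∈ range n, (∑ j ∈ Icc 1 i, d j) * (b i - b (i + 1)) := by
  induction n with
  | zero => simp
  | succ n ih =>
    rw [sum_Icc_succ_top (by omega), sum_Icc_succ_top (by omega), sum_range_succ, ih]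
    ring

namespace Real

lemma log_sub_log_le_div {x y : ℝ} (hx : 0 < x) (hy : 0 < y) :
    log y - log x ≤ (y - x) / x := by
  rw [← log_div hy.ne' hx.ne', sub_div, div_self hx.ne']
  exact log_le_sub_one_of_pos (div_pos hy hx)

lemma div_le_log_sub_log {x y : ℝ} (hx : 0 < x) (hy : 0 < y) :
    (y - x) / y ≤ log y - log x := by
  have h := log_sub_log_le_div hy hx
  rw [show (x - y) / y = -((y - x) / y) by ring] at h
  linarith

lemma abs_log_sub_log_le {x y : ℝ} (hx : 1 ≤ x) (hy : 1 ≤ y) : |log y - log x| ≤ |y - x| := by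
  have hx0 : 0 < x := by linarith
  have hy0 : 0 < y := by linarith
  have h1 : (y - x) / x ≤ |y - x| := div_le_of_le_mul₀ hx0.le (abs_nonneg _) <| by
    nlinarith [le_abs_self (y - x), mul_le_mul_of_nonneg_left hx (abs_nonneg (y - x))]
  have h2 : (y - x) / y ≥ -|y - x| := by
    rw [ge_iff_le, neg_le, ← neg_div, neg_sub]
    exact div_le_of_le_mul₀ hy0.le (abs_nonneg _) <| by
      nlinarith [neg_abs_le (y - x), mul_le_mul_of_nonneg_left hy (abs_nonneg (y - x))]
  rw [abs_le]
  constructor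
  · linarith [div_le_log_sub_log hx0 hy0]
  · linarith [log_sub_log_le_div hx0 hy0]

lemma log_log_sub_log_log_le {x y : ℝ} (hx0 : 0 < x) (hx : 1 ≤ log x) (hxy : x ≤ y) :
    log (log y) - log (log x) ≤ (y - x) / (x * log x) := by
  have hlog : log x ≤ log y := log_le_log hx0 hxy
  calc log (log y) - log (log x) ≤ (log y - log x) / log x :=
        log_sub_log_le_div (by linarith) (by linarith)
    _ ≤ (y - x) / x / log x := by
        gcongr
        exact log_sub_log_le_div hx0 (by linarith)
    _ = (y - x) / (x * log x) := by rw [div_div]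

lemma div_le_log_log_sub_log_log {x y : ℝ} (hx0 : 0 < x) (hx : 1 ≤ log x) (hxy : x ≤ y) :
    (y - x) / (y * log y) ≤ log (log y) - log (log x) := by
  have hlog : log x ≤ log y := log_le_log hx0 hxy
  calc (y - x) / (y * log y) = (y - x) / y / log y := by rw [div_div]
    _ ≤ (log y - log x) / log y :=
        div_le_div_of_nonneg_right (div_le_log_sub_log hx0 (by linarith)) (by linarith)
    _ ≤ log (log y) - log (log x) := div_le_log_sub_log (by linarith) (by linarith)

lemma abs_inv_mul_log_sub_inv_mul_log_le {x y : ℝ} (hx0 : 0 < x) (hx : 1 ≤ log x)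
    (hxy : x ≤ y) : |(x * log x)⁻¹ - (y * log y)⁻¹| ≤ 2 * (y - x) / x ^ 2 := by
  have hlog : log x ≤ log y := log_le_log hx0 hxy
  have hy0 : 0 < y := by linarith
  have hφx : 0 < x * log x := mul_pos hx0 (by linarith)
  have hφy : x * log x ≤ y * log y := mul_le_mul hxy hlog (by linarith) hy0.le
  -- `x log x` has slope at most `log y + 1 ≤ 2 log y` on `[x, y]`
  have hnum : y * log y - x * log x ≤ 2 * (y - x) * log y := by
    have h1 : (log y - log x) * x ≤ y - x := (le_div_iff₀ hx0).1 (log_sub_log_le_div hx0 hy0)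
    have h2 : (y - x) * 1 ≤ (y - x) * log y := mul_le_mul_of_nonneg_left (by linarith) (by linarith)
    linarith
  have hden : x ^ 2 * log y ≤ x * log x * (y * log y) := by
    have h1 : x * 1 ≤ x * log x := mul_le_mul_of_nonneg_left hx hx0.le
    have h2 : x * log y ≤ y * log y := mul_le_mul_of_nonneg_right hxy (by linarith)
    nlinarith [mul_le_mul h1 h2 (by nlinarith) hφx.le]
  rw [inv_sub_inv hφx.ne' (by linarith),
    abs_of_nonneg (div_nonneg (by linarith) (mul_pos hφx (hφx.trans_le hφy)).le)]
  calc (y * log y - x * log x) / (x * log x * (y * log y))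
      ≤ 2 * (y - x) * log y / (x ^ 2 * log y) :=
        div_le_div₀ (by nlinarith) hnum (mul_pos (by positivity) (by linarith)) hden
    _ = 2 * (y - x) / x ^ 2 := mul_div_mul_right _ _ (by linarith)

end Real

lemma natCast_rpow_mul_inv_sq {p : ℝ} (hp : p ≠ 2) (n : ℕ) :
    (n : ℝ) ^ p * ((n : ℝ) ^ 2)⁻¹ = (n : ℝ) ^ (p - 2) := by
  rw [rpow_sub' (Nat.cast_nonneg n) (sub_ne_zero.2 hp), rpow_two, div_eq_mul_inv]

lemma isLittleO_natCast_rpow_natCast {p : ℝ} (hp : p < 1) :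
    (fun n : ℕ => (n : ℝ) ^ p) =o[atTop] fun n => (n : ℝ) := by
  have hzero : ∀ᶠ n : ℕ in atTop, (n : ℝ) = 0 → (n : ℝ) ^ p = 0 := by
    filter_upwards [eventually_ne_atTop 0] with n hn h
    exact absurd (Nat.cast_eq_zero.1 h) hn
  rw [isLittleO_iff_tendsto' hzero]
  have hlim := (tendsto_rpow_neg_atTop (by linarith : 0 < 1 - p)).comp tendsto_natCast_atTop_atTop
  refine hlim.congr' ?_
  filter_upwards [eventually_ne_atTop 0] with n hn
  rw [Function.comp_apply, neg_sub, rpow_sub_one (Nat.cast_ne_zero.2 hn)]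

lemma eventually_one_le_log_mul_natCast {c : ℝ} (hc : 0 < c) :
    ∀ᶠ i : ℕ in atTop, 1 ≤ log (c * i) :=
  (tendsto_log_atTop.comp (tendsto_natCast_atTop_atTop.const_mul_atTop hc)).eventually_ge_atTop 1

lemma isBigO_one_sum_Icc_of_summable {f : ℕ → ℝ} (hf : Summable f) :
    (fun n => ∑ i ∈ Icc 1 n, f i) =O[atTop] fun _ => (1 : ℝ) := by
  simp only [sum_Icc_one_eq_sum_range]
  exact ((summable_nat_add_iff 1).2 hf).tendsto_sum_tsum_nat.isBigO_one ℝ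

lemma isBigO_one_sum_Icc_mul {d b : ℕ → ℝ} {p : ℝ} (hp : p < 1)
    (hd : (fun n => ∑ i ∈ Icc 1 n, d i) =O[atTop] fun n => (n : ℝ) ^ p)
    (hb : b =O[atTop] fun n => (n : ℝ)⁻¹)
    (hb' : (fun i => b i - b (i + 1)) =O[atTop] fun i => ((i : ℝ) ^ 2)⁻¹) :
    (fun n => ∑ i ∈ Icc 1 n, d i * b i) =O[atTop] fun _ => (1 : ℝ) := by
  simp only [sum_Icc_mul_eq_add_sum_range]
  refine IsBigO.add ((hd.mul hb).trans (IsBigO.of_bound 1 ?_)) ?_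
  · filter_upwards [eventually_ge_atTop 1] with n hn
    have hn' : (1 : ℝ) ≤ n := by exact_mod_cast hn
    rw [← rpow_neg_one, ← rpow_add (by positivity), norm_one, mul_one,
      Real.norm_of_nonneg (by positivity)]
    exact rpow_le_one_of_one_le_of_nonpos hn' (by linarith)
  · have hsum : Summable fun i => (∑ j ∈ Icc 1 i, d j) * (b i - b (i + 1)) :=
      summable_of_isBigO_nat (Real.summable_nat_rpow.2 (by linarith : p - 2 < -1))
        ((hd.mul hb').congr_right (natCast_rpow_mul_inv_sq (by linarith)))
    exact hsum.tendsto_sum_tsum_nat.isBigO_one ℝ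

lemma isBigO_inv_mul_log_sub_inv_mul_log {t : ℕ → ℝ} {m : ℝ} (hm : 0 < m)
    (ht : (fun i => t i - m * i) =o[atTop] fun i => (i : ℝ)) :
    (fun i => (t i * log (t i))⁻¹ - (m * i * log (m * i))⁻¹) =O[atTop]
      fun i => (t i - m * i) / (i : ℝ) ^ 2 := by
  refine IsBigO.of_bound (8 / m ^ 2) ?_
  filter_upwards [ht.bound (half_pos hm), eventually_one_le_log_mul_natCast (half_pos hm),
    eventually_gt_atTop 0] with i hclose hl hi
  rw [Real.norm_eq_abs, Real.norm_natCast] at hclose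
  have hc : 0 < m / 2 * i := by positivity
  have key {x y : ℝ} (hx : m / 2 * i ≤ x) (hxy : x ≤ y) :
      |(x * log x)⁻¹ - (y * log y)⁻¹| ≤ 8 / m ^ 2 * ((y - x) / i ^ 2) :=
    calc _ ≤ 2 * (y - x) / x ^ 2 :=
          abs_inv_mul_log_sub_inv_mul_log_le (hc.trans_le hx) (hl.trans (log_le_log hc hx)) hxy
      _ ≤ 2 * (y - x) / (m / 2 * i) ^ 2 := by gcongr
      _ = 8 / m ^ 2 * ((y - x) / i ^ 2) := by field_simp; ring
  rw [Real.norm_eq_abs, Real.norm_eq_abs, abs_div, abs_of_pos (by positivity : (0 : ℝ) < i ^ 2)]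
  rcases le_total (t i) (m * i) with h | h
  · rw [abs_sub_comm (t i), abs_of_nonneg (sub_nonneg.2 h)]
    exact key (by linarith [neg_abs_le (t i - m * i)]) h
  · rw [abs_sub_comm (t i * log (t i))⁻¹, abs_of_nonneg (sub_nonneg.2 h)]
    exact key (by nlinarith) h

lemma isBigO_inv_mul_log_natCast {m : ℝ} (hm : 0 < m) :
    (fun i : ℕ => (m * i * log (m * i))⁻¹) =O[atTop] fun i => (i : ℝ)⁻¹ := by
  refine IsBigO.of_bound m⁻¹ ?_
  filter_upwards [eventually_one_le_log_mul_natCast hm, eventually_gt_atTop 0] with i hl hi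
  rw [Real.norm_eq_abs, Real.norm_eq_abs, abs_of_nonneg (by positivity),
    abs_of_nonneg (by positivity), ← mul_inv]
  exact inv_anti₀ (by positivity) (le_mul_of_one_le_right (by positivity) hl)

lemma isBigO_inv_mul_log_sub_succ {m : ℝ} (hm : 0 < m) :
    (fun i : ℕ => (m * i * log (m * i))⁻¹ - (m * (i + 1 : ℕ) * log (m * (i + 1 : ℕ)))⁻¹)
      =O[atTop] fun i => ((i : ℝ) ^ 2)⁻¹ := by
  have hstep : (fun i : ℕ => m * (i + 1 : ℕ) - m * i) = fun _ => m := by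
    ext i; push_cast; ring
  have ho : (fun i : ℕ => m * (i + 1 : ℕ) - m * i) =o[atTop] fun i => (i : ℝ) := by
    rw [hstep]
    exact isLittleO_const_left.2
      (Or.inr (tendsto_norm_atTop_atTop.comp tendsto_natCast_atTop_atTop))
  refine ((isBigO_inv_mul_log_sub_inv_mul_log hm ho).neg_left.congr_left fun i => by ring).trans ?_
  refine IsBigO.of_bound m (Eventually.of_forall fun i => ?_)
  rw [congrFun hstep i, Real.norm_eq_abs, Real.norm_eq_abs, abs_div, abs_of_pos hm, div_eq_mul_inv,
    abs_inv]

lemma isBigO_one_log_log_succ_sub_log_log {m : ℝ} (hm : 0 < m) :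
    (fun n : ℕ => log (log (m * (n + 1 : ℕ))) - log (log n)) =O[atTop] fun _ => (1 : ℝ) := by
  have hlog : ∀ᶠ n : ℕ in atTop, 1 ≤ log (m * (n + 1 : ℕ)) :=
    (tendsto_add_atTop_nat 1).eventually (eventually_one_le_log_mul_natCast hm)
  have hlog' : ∀ᶠ n : ℕ in atTop, 1 ≤ log n := by
    simpa using eventually_one_le_log_mul_natCast one_pos
  refine IsBigO.of_bound (|log m| + 1) ?_
  filter_upwards [hlog, hlog', eventually_ge_atTop 1] with n h1 h2 hn
  have hn' : (1 : ℝ) ≤ n := by exact_mod_cast hn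
  have hsucc : |log (n + 1 : ℕ) - log n| ≤ 1 := by
    simpa using abs_log_sub_log_le hn' (by push_cast; linarith : (1 : ℝ) ≤ (n + 1 : ℕ))
  rw [norm_one, mul_one, Real.norm_eq_abs]
  calc |log (log (m * (n + 1 : ℕ))) - log (log n)| ≤ |log (m * (n + 1 : ℕ)) - log n| :=
        abs_log_sub_log_le h2 h1
    _ = |log m + (log (n + 1 : ℕ) - log n)| := by
        rw [log_mul hm.ne' (by positivity)]; ring_nf
    _ ≤ |log m| + 1 := (abs_add_le _ _).trans (by linarith)

lemma isBigO_one_sum_Icc_inv_mul_log_sub_log_log {m : ℝ} (hm : 0 < m) :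
    (fun n : ℕ => ∑ i ∈ Icc 1 n, (m * i * log (m * i))⁻¹ - m⁻¹ * log (log n)) =O[atTop]
      fun _ => (1 : ℝ) := by
  set b : ℕ → ℝ := fun i => (m * i * log (m * i))⁻¹
  set ℓ : ℕ → ℝ := fun i => log (log (m * i))
  -- the increments of `ℓ` are squeezed: `m b (i + 1) ≤ ℓ (i + 1) - ℓ i ≤ m b i`
  have hs : (fun i => m * b i - (ℓ (i + 1) - ℓ i)) =O[atTop] fun i => ((i : ℝ) ^ 2)⁻¹ := by
    refine IsBigO.trans ?_ ((isBigO_inv_mul_log_sub_succ hm).const_mul_left m)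
    refine IsBigO.of_bound' ?_
    filter_upwards [eventually_one_le_log_mul_natCast hm, eventually_gt_atTop 0] with i hl hi
    have hx0 : 0 < m * i := by positivity
    have hxy : m * i ≤ m * (i + 1 : ℕ) := by gcongr; exact_mod_cast i.le_succ
    have hup := log_log_sub_log_log_le hx0 hl hxy
    have hlo := div_le_log_log_sub_log_log hx0 hl hxy
    rw [show m * ((i + 1 : ℕ) : ℝ) - m * i = m by push_cast; ring, div_eq_mul_inv] at hup hlo
    rw [Real.norm_eq_abs, Real.norm_eq_abs, abs_of_nonneg (by linarith),
      abs_of_nonneg (by rw [mul_sub]; linarith), mul_sub]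
    linarith
  have hid : ∀ n : ℕ, ∑ i ∈ Icc 1 n, b i - m⁻¹ * log (log n) =
      m⁻¹ * ∑ i ∈ Icc 1 n, (m * b i - (ℓ (i + 1) - ℓ i)) +
        m⁻¹ * (ℓ (n + 1) - log (log n)) - m⁻¹ * ℓ 1 := by
    intro n
    rw [sum_sub_distrib, ← mul_sum, sum_Icc_one_eq_sum_range (fun i => ℓ (i + 1) - ℓ i),
      sum_range_sub (fun i => ℓ (i + 1))]
    field_simp
    ring
  refine IsBigO.congr_left ?_ fun n => (hid n).symm
  refine IsBigO.sub (IsBigO.add ?_ ?_) (isBigO_const_one ℝ _ _)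
  · exact (isBigO_one_sum_Icc_of_summable (summable_of_isBigO_nat
      (Real.summable_nat_pow_inv.2 one_lt_two) hs)).const_mul_left _
  · exact (isBigO_one_log_log_succ_sub_log_log hm).const_mul_left _

theorem isBigO_one_sum_Icc_div_mul_log_sub_log_log {c t : ℕ → ℝ} {a m p : ℝ} (hm : 0 < m)
    (hp : p < 1)
    (ht : (fun i => t i - m * i) =O[atTop] fun i => (i : ℝ) ^ p)
    (hc : (fun n => ∑ i ∈ Icc 1 n, c i - a * n) =O[atTop] fun n => (n : ℝ) ^ p)
    (hsum : Summable fun i => c i * (i : ℝ) ^ (p - 2)) :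
    (fun n => ∑ i ∈ Icc 1 n, c i / (t i * log (t i)) - a / m * log (log n)) =O[atTop]
      fun _ => (1 : ℝ) := by
  set b : ℕ → ℝ := fun i => (m * i * log (m * i))⁻¹
  have hid : ∀ n : ℕ, ∑ i ∈ Icc 1 n, c i / (t i * log (t i)) - a / m * log (log n) =
      ∑ i ∈ Icc 1 n, c i * ((t i * log (t i))⁻¹ - b i) + ∑ i ∈ Icc 1 n, (c i - a) * b i +
        a * (∑ i ∈ Icc 1 n, b i - m⁻¹ * log (log n)) := by
    intro n
    simp only [mul_sub, sub_mul, sum_sub_distrib, mul_sum, div_eq_mul_inv]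
    ring
  refine IsBigO.congr_left ?_ fun n => (hid n).symm
  refine IsBigO.add (IsBigO.add ?_ ?_)
    ((isBigO_one_sum_Icc_inv_mul_log_sub_log_log hm).const_mul_left a)
  · have hdiff := isBigO_inv_mul_log_sub_inv_mul_log hm
      (ht.trans_isLittleO (isLittleO_natCast_rpow_natCast hp))
    have hrate : (fun i => (t i - m * i) / (i : ℝ) ^ 2) =O[atTop] fun i => (i : ℝ) ^ (p - 2) :=
      (ht.mul (isBigO_refl (fun i : ℕ => ((i : ℝ) ^ 2)⁻¹) atTop)).congr
        (fun i => (div_eq_mul_inv _ _).symm) (natCast_rpow_mul_inv_sq (by linarith))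
    exact isBigO_one_sum_Icc_of_summable
      (summable_of_isBigO_nat hsum ((isBigO_refl c atTop).mul (hdiff.trans hrate)))
  · refine isBigO_one_sum_Icc_mul hp (hc.congr_left fun n => ?_) (isBigO_inv_mul_log_natCast hm)
      (isBigO_inv_mul_log_sub_succ hm)
    rw [sum_sub_distrib, sum_const, Nat.card_Icc, nsmul_eq_mul, Nat.add_sub_cancel, mul_comm]

lemma Nat.tendsto_sqrt_atTop : Tendsto Nat.sqrt atTop atTop :=
  tendsto_atTop_atTop.2 fun b => ⟨b ^ 2, fun _ hn => Nat.le_sqrt'.2 hn⟩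

lemma abs_sub_mul_le_of_monotone {G : ℕ → ℝ} {a : ℝ} (ha : 0 ≤ a) (hG : Monotone G) (n : ℕ) :
    |G n - a * n| ≤ |G (n.sqrt ^ 2) - a * (n.sqrt : ℝ) ^ 2| +
      |G ((n.sqrt + 1) ^ 2) - a * ((n.sqrt + 1 : ℕ) : ℝ) ^ 2| + a * (2 * n.sqrt + 1) := by
  set k := n.sqrt
  have hlo : (k : ℝ) ^ 2 ≤ n := by exact_mod_cast Nat.sqrt_le' n
  have hhi : (n : ℝ) + 1 ≤ ((k + 1 : ℕ) : ℝ) ^ 2 := by exact_mod_cast Nat.lt_succ_sqrt' n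
  push_cast at hhi ⊢
  have h1 : a * (n - (k : ℝ) ^ 2) ≤ a * (2 * k + 1) := mul_le_mul_of_nonneg_left (by linarith) ha
  have h2 : a * (((k : ℝ) + 1) ^ 2 - n) ≤ a * (2 * k + 1) :=
    mul_le_mul_of_nonneg_left (by linarith) ha
  have hG1 := hG (Nat.sqrt_le' n)
  have hG2 := hG (Nat.lt_succ_sqrt' n).le
  rw [abs_le]
  constructor
  · nlinarith [neg_abs_le (G (k ^ 2) - a * (k : ℝ) ^ 2),
      abs_nonneg (G ((k + 1) ^ 2) - a * ((k : ℝ) + 1) ^ 2)]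
  · nlinarith [le_abs_self (G ((k + 1) ^ 2) - a * ((k : ℝ) + 1) ^ 2),
      abs_nonneg (G (k ^ 2) - a * (k : ℝ) ^ 2)]

lemma natCast_sqrt_le_rpow {p : ℝ} (hp : 1 / 2 ≤ p) {n : ℕ} (hn : 1 ≤ n) :
    (n.sqrt : ℝ) ≤ (n : ℝ) ^ p :=
  calc (n.sqrt : ℝ) = ((n.sqrt : ℝ) ^ 2) ^ (1 / 2 : ℝ) := by
        rw [← rpow_natCast, ← rpow_mul (by positivity)]; norm_num
    _ ≤ (n : ℝ) ^ (1 / 2 : ℝ) :=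
        rpow_le_rpow (by positivity) (by exact_mod_cast Nat.sqrt_le' n) (by norm_num)
    _ ≤ (n : ℝ) ^ p := rpow_le_rpow_of_exponent_le (by exact_mod_cast hn) hp

lemma isBigO_sub_mul_of_monotone {G : ℕ → ℝ} {a p : ℝ} (ha : 0 ≤ a) (hp : 1 / 2 ≤ p)
    (hG : Monotone G)
    (hsq : (fun k : ℕ => G (k ^ 2) - a * (k : ℝ) ^ 2) =O[atTop] fun k => ((k : ℝ) ^ 2) ^ p) :
    (fun n : ℕ => G n - a * n) =O[atTop] fun n => (n : ℝ) ^ p := by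
  have hlow : (fun n : ℕ => G (n.sqrt ^ 2) - a * (n.sqrt : ℝ) ^ 2) =O[atTop]
      fun n => (n : ℝ) ^ p :=
    (hsq.comp_tendsto Nat.tendsto_sqrt_atTop).trans <| IsBigO.of_bound' <|
      Eventually.of_forall fun n => by
        simp only [Function.comp_apply, Real.norm_eq_abs]
        rw [abs_of_nonneg (by positivity), abs_of_nonneg (by positivity)]
        exact rpow_le_rpow (by positivity) (by exact_mod_cast Nat.sqrt_le' n) (by linarith)
  have hhigh : (fun n : ℕ => G ((n.sqrt + 1) ^ 2) - a * ((n.sqrt + 1 : ℕ) : ℝ) ^ 2) =O[atTop]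
      fun n => (n : ℝ) ^ p := by
    refine (hsq.comp_tendsto ((tendsto_add_atTop_nat 1).comp Nat.tendsto_sqrt_atTop)).trans <|
      IsBigO.of_bound (4 ^ p) ?_
    filter_upwards [eventually_ge_atTop 1] with n hn
    have hk : 1 ≤ n.sqrt := Nat.le_sqrt'.2 (by simpa using hn)
    have h4 : (((n.sqrt + 1 : ℕ) : ℝ) ^ 2) ≤ 4 * n := by
      have : (n.sqrt : ℝ) ^ 2 ≤ n := by exact_mod_cast Nat.sqrt_le' n
      push_cast
      nlinarith [(by exact_mod_cast hk : (1 : ℝ) ≤ n.sqrt)]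
    simp only [Function.comp_apply, Real.norm_eq_abs]
    rw [abs_of_nonneg (by positivity), abs_of_nonneg (by positivity), ← mul_rpow (by norm_num)
      (by positivity)]
    exact rpow_le_rpow (by positivity) h4 (by linarith)
  have hlin : (fun n : ℕ => a * (2 * (n.sqrt : ℝ) + 1)) =O[atTop] fun n => (n : ℝ) ^ p := by
    refine IsBigO.of_bound (3 * a) ?_
    filter_upwards [eventually_ge_atTop 1] with n hn
    have hk : (1 : ℝ) ≤ n.sqrt := by exact_mod_cast Nat.le_sqrt'.2 (by simpa using hn)
    have hk' := natCast_sqrt_le_rpow hp hn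
    rw [Real.norm_eq_abs, Real.norm_eq_abs, abs_of_nonneg (by positivity),
      abs_of_nonneg (by positivity)]
    nlinarith
  refine IsBigO.trans (IsBigO.of_bound' (Eventually.of_forall fun n => ?_))
    ((hlow.norm_left.add hhigh.norm_left).add hlin)
  simp only [Real.norm_eq_abs]
  exact (abs_sub_mul_le_of_monotone ha hG n).trans (le_abs_self _)

section Probability

variable {Ω : Type*} [MeasurableSpace Ω] {μ : Measure Ω}

lemma integral_sum_Icc_of_identDistrib {X : ℕ → Ω → ℝ} (hX : Integrable (X 0) μ)
    (hident : ∀ i, IdentDistrib (X i) (X 0) μ μ) (n : ℕ) :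
    μ[∑ i ∈ Icc 1 n, X i] = μ[X 0] * (n : ℝ) := by
  simp only [Finset.sum_apply]
  rw [integral_finsetSum _ fun i _ => (hident i).integrable_iff.2 hX]
  simp [(hident _).integral_eq, mul_comm]

lemma variance_sum_Icc_of_identDistrib {X : ℕ → Ω → ℝ} (hX : MemLp (X 0) 2 μ)
    (hindep : Pairwise fun i j => X i ⟂ᵢ[μ] X j) (hident : ∀ i, IdentDistrib (X i) (X 0) μ μ)
    (n : ℕ) : Var[∑ i ∈ Icc 1 n, X i; μ] = Var[X 0; μ] * (n : ℝ) := by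
  rw [IndepFun.variance_sum (fun i _ => (hident i).symm.memLp_snd hX) (hindep.set_pairwise _)]
  simp [(hident _).variance_eq, mul_comm]

lemma ae_eventually_abs_sum_Icc_sq_sub_le [IsFiniteMeasure μ] {X : ℕ → Ω → ℝ}
    (hX : MemLp (X 0) 2 μ) (hindep : Pairwise fun i j => X i ⟂ᵢ[μ] X j)
    (hident : ∀ i, IdentDistrib (X i) (X 0) μ μ) {p : ℝ} (hp : 3 / 4 < p) :
    ∀ᵐ ω ∂μ, ∀ᶠ k : ℕ in atTop,
      |∑ i ∈ Icc 1 (k ^ 2), X i ω - μ[X 0] * (k : ℝ) ^ 2| ≤ ((k : ℝ) ^ 2) ^ p := by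
  set s : ℕ → Set Ω := fun k =>
    {ω | ((k : ℝ) ^ 2) ^ p < |∑ i ∈ Icc 1 (k ^ 2), X i ω - μ[X 0] * (k : ℝ) ^ 2|}
  -- Chebyshev: `μ (s k) ≤ k² Var[X 0] / (k²)^{2p}`, summable in `k` since `p > 3/4`
  have hcheb (k : ℕ) : μ (s k) ≤ ENNReal.ofReal (Var[X 0; μ] * (k : ℝ) ^ (2 * (1 - 2 * p))) := by
    rcases Nat.eq_zero_or_pos k with rfl | hk
    · simp [s, zero_rpow (by linarith : p ≠ 0)]
    have hk2 : (0 : ℝ) < (k : ℝ) ^ 2 := by positivity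
    have h := meas_ge_le_variance_div_sq (X := ∑ i ∈ Icc 1 (k ^ 2), X i)
      (memLp_finsetSum' _ fun i _ => (hident i).symm.memLp_snd hX) (rpow_pos_of_pos hk2 p)
    rw [variance_sum_Icc_of_identDistrib hX hindep hident,
      integral_sum_Icc_of_identDistrib (hX.integrable one_le_two) hident] at h
    refine (measure_mono fun ω hω => ?_).trans (h.trans (ENNReal.ofReal_le_ofReal (le_of_eq ?_)))
    · simp only [Set.mem_ofPred_eq, Finset.sum_apply, s] at hω ⊢
      push_cast
      exact hω.le
    · have hk0 : (0 : ℝ) < k := by exact_mod_cast hk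
      rw [← rpow_natCast_mul hk0.le, ← rpow_mul_natCast hk0.le, mul_div_assoc,
        show (2 : ℝ) * (1 - 2 * p) = 2 - (2 : ℕ) * p * (2 : ℕ) by push_cast; ring, rpow_sub hk0,
        rpow_two]
      push_cast
      ring
  have hsum : ∑' k, μ (s k) ≠ ⊤ := by
    refine ne_top_of_le_ne_top ?_ (ENNReal.tsum_le_tsum hcheb)
    rw [← ENNReal.ofReal_tsum_of_nonneg (fun k => mul_nonneg (variance_nonneg _ _) (by positivity))
      ((Real.summable_nat_rpow.2 (by linarith)).mul_left _)]
    exact ENNReal.ofReal_ne_top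
  filter_upwards [ae_eventually_notMem hsum] with ω hω
  exact hω.mono fun k hk => not_lt.1 hk

theorem ae_isBigO_sum_Icc_sub_mul [IsFiniteMeasure μ] {X : ℕ → Ω → ℝ} (hX : MemLp (X 0) 2 μ)
    (hindep : Pairwise fun i j => X i ⟂ᵢ[μ] X j) (hident : ∀ i, IdentDistrib (X i) (X 0) μ μ)
    (hnonneg : ∀ i, 0 ≤ᵐ[μ] X i) {p : ℝ} (hp : 3 / 4 < p) :
    ∀ᵐ ω ∂μ, (fun n : ℕ => ∑ i ∈ Icc 1 n, X i ω - μ[X 0] * n) =O[atTop]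
      fun n => (n : ℝ) ^ p := by
  filter_upwards [ae_eventually_abs_sum_Icc_sq_sub_le hX hindep hident hp,
    ae_all_iff.2 hnonneg] with ω hω hω0
  refine isBigO_sub_mul_of_monotone (integral_nonneg_of_ae (hnonneg 0)) (by linarith)
    (fun m n hmn => sum_le_sum_of_subset_of_nonneg (Icc_subset_Icc le_rfl hmn)
      fun i _ _ => hω0 i) (IsBigO.of_bound' (hω.mono fun k hk => ?_))
  rwa [Real.norm_eq_abs, Real.norm_of_nonneg (by positivity)]

theorem ae_summable_mul_of_identDistrib {X : ℕ → Ω → ℝ} (hX : Integrable (X 0) μ)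
    (hident : ∀ i, IdentDistrib (X i) (X 0) μ μ) {w : ℕ → ℝ} (hw : Summable w) :
    ∀ᵐ ω ∂μ, Summable fun i => X i ω * w i := by
  have hmeas : ∀ i, AEStronglyMeasurable (w i • X i) μ :=
    fun i => (hident i).aemeasurable_fst.aestronglyMeasurable.const_smul (w i)
  have hnorm : ∑' i, eLpNorm (w i • X i) 1 μ ≠ ⊤ := by
    simp only [eLpNorm_const_smul, fun i => (hident i).eLpNorm_eq, ENNReal.tsum_mul_right]
    exact ENNReal.mul_ne_top (tsum_enorm_ne_top_iff_summable_norm.2 hw.norm)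
      (memLp_one_iff_integrable.2 hX).eLpNorm_lt_top.ne
  filter_upwards [summable_norm_of_tsum_eLpNorm_ne_top le_rfl hmeas hnorm] with ω hω
  exact hω.of_norm.congr fun i => mul_comm _ _

end Probability

theorem stmt_19_general {Ω : Type*} [MeasurableSpace Ω] (μ : Measure Ω) [IsProbabilityMeasure μ]
    (L : ℕ → Ω → ℝ) (g : ℝ → ℝ) (m : ℝ)
    (hindep : iIndepFun L μ)
    (hident : ∀ n, IdentDistrib (L n) (L 0) μ μ)
    (hpos : ∀ n, ∀ᵐ ω ∂μ, 0 < L n ω)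
    (hL2 : MemLp (L 0) 2 μ)
    (hmean : μ[L 0] = m) (hm : 0 < m)
    (hg : Measurable g) (hgnonneg : ∀ x, 0 ≤ g x)
    (hgL2 : MemLp (fun ω => g (L 0 ω)) 2 μ) :
    ∀ᵐ ω ∂μ, ∃ C : ℝ, ∀ n : ℕ, 2 ≤ n →
      |(∑ i ∈ Finset.Icc 1 n,
          g (L (i + 1) ω) /
            ((∑ j ∈ Finset.Icc 1 i, L j ω) * Real.log (∑ j ∈ Finset.Icc 1 i, L j ω))) -
        ((μ[fun ω' => g (L 0 ω')]) / m) * Real.log (Real.log n)| ≤ C := by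
  set Y : ℕ → Ω → ℝ := fun i ω => g (L (i + 1) ω)
  have hY0 : IdentDistrib (Y 0) (fun ω => g (L 0 ω)) μ μ := (hident 1).comp hg
  have hYident (i : ℕ) : IdentDistrib (Y i) (Y 0) μ μ := ((hident (i + 1)).comp hg).trans hY0.symm
  have hY2 : MemLp (Y 0) 2 μ := hY0.symm.memLp_snd hgL2
  have hYindep : Pairwise fun i j => Y i ⟂ᵢ[μ] Y j :=
    fun i j hij => (hindep.indepFun (by simpa using hij)).comp hg hg
  have hT := ae_isBigO_sum_Icc_sub_mul hL2 (fun i j hij => hindep.indepFun hij) hident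
    (fun i => (hpos i).mono fun _ h => h.le) (show 3 / 4 < (5 / 6 : ℝ) by norm_num)
  have hG := ae_isBigO_sum_Icc_sub_mul hY2 hYindep hYident
    (fun i => ae_of_all _ fun _ => hgnonneg _) (show 3 / 4 < (5 / 6 : ℝ) by norm_num)
  have hS := ae_summable_mul_of_identDistrib (hY2.integrable one_le_two) hYident
    (Real.summable_nat_rpow.2 (show (5 / 6 : ℝ) - 2 < -1 by norm_num))
  filter_upwards [hT, hG, hS] with ω hTω hGω hSω
  rw [hmean] at hTω
  rw [hY0.integral_eq] at hGω
  obtain ⟨C, hC⟩ := isBigO_one_nat_atTop_iff.1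
    (isBigO_one_sum_Icc_div_mul_log_sub_log_log hm (by norm_num) hTω hGω hSω)
  exact ⟨C, fun n _ => (Real.norm_eq_abs _).symm.trans_le (hC n)⟩

theorem stmt_19 {Ω : Type*} [MeasurableSpace Ω] (μ : Measure Ω) [IsProbabilityMeasure μ]
    (L : ℕ → Ω → ℝ) (g : ℝ → ℝ) (m : ℝ)
    (hmeas : ∀ n, Measurable (L n))
    (hindep : iIndepFun L μ)
    (hident : ∀ n, IdentDistrib (L n) (L 0) μ μ)
    (hpos : ∀ n, ∀ᵐ ω ∂μ, 0 < L n ω)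
    (hL2 : MemLp (L 0) 2 μ)
    (hmean : μ[L 0] = m) (hm : 0 < m)
    (hg : Measurable g) (hgnonneg : ∀ x, 0 ≤ g x)
    (hgL2 : MemLp (fun ω => g (L 0 ω)) 2 μ) :
    ∀ᵐ ω ∂μ, ∃ C : ℝ, ∀ n : ℕ, 2 ≤ n →
      |(∑ i ∈ Finset.Icc 1 n,
          g (L (i + 1) ω) /
            ((∑ j ∈ Finset.Icc 1 i, L j ω) * Real.log (∑ j ∈ Finset.Icc 1 i, L j ω))) -
        ((μ[fun ω' => g (L 0 ω')]) / m) * Real.log (Real.log n)| ≤ C :=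
  stmt_19_general μ L g m hindep hident hpos hL2 hmean hm hg hgnonneg hgL2
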